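/- Define MCC(ρ) = (1/3)(1 + 2(1 + ερ)/√(1 + ε² + 2ερ)) for ε ∈ (0,1), ρ ∈ (-1,1). Then MCC(ρ) → 1 as ρ → 1⁻ and as ρ → -1⁺, and MCC attains its interior minimum (1 + 2√(1-ε²))/3 at ρ = -ε. -/

import Mathlib

noncomputable def MCC (ε ρ : ℝ) : ℝ :=
  (1 / 3) * (1 + 2 * (1 + ε * ρ) / Real.sqrt (1 + ε ^ 2 + 2 * ε * ρ))

lemma mcc_contAt (ε a : ℝ) (h : 0 < 1 + ε ^ 2 + 2 * ε * a) : ContinuousAt (MCC ε) a := by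
  unfold MCC
  have hs : Real.sqrt (1 + ε ^ 2 + 2 * ε * a) ≠ 0 := (Real.sqrt_pos.mpr h).ne'
  apply ContinuousAt.mul continuousAt_const
  apply ContinuousAt.add continuousAt_const
  exact ContinuousAt.div (by fun_prop) (by fun_prop) hs

theorem stmt_5 (ε : ℝ) (hε : 0 < ε) (hε1 : ε < 1) :
    Filter.Tendsto (MCC ε) (nhdsWithin 1 (Set.Iio 1)) (nhds 1) ∧
    Filter.Tendsto (MCC ε) (nhdsWithin (-1) (Set.Ioi (-1))) (nhds 1) ∧
    (-ε) ∈ Set.Ioo (-1 : ℝ) 1 ∧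
    MCC ε (-ε) = (1 + 2 * Real.sqrt (1 - ε ^ 2)) / 3 ∧
    ∀ ρ ∈ Set.Ioo (-1 : ℝ) 1, (1 + 2 * Real.sqrt (1 - ε ^ 2)) / 3 ≤ MCC ε ρ := by
  have h1 : MCC ε 1 = 1 := by
    unfold MCC
    rw [show (1 + ε ^ 2 + 2 * ε * 1) = (1 + ε) ^ 2 by ring,
      Real.sqrt_sq (by linarith)]
    field_simp
    ring
  have hm1 : MCC ε (-1) = 1 := by
    unfold MCC
    rw [show (1 + ε ^ 2 + 2 * ε * (-1)) = (1 - ε) ^ 2 by ring,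
      Real.sqrt_sq (by linarith)]
    rw [show (1 + ε * (-1)) = 1 - ε by ring]
    have hne : (1:ℝ) - ε ≠ 0 := by linarith
    field_simp
    norm_num
  refine ⟨?_, ?_, ⟨by linarith, by linarith⟩, ?_, ?_⟩
  · have := (mcc_contAt ε 1 (by nlinarith)).continuousWithinAt (s := Set.Iio 1)
    rw [ContinuousWithinAt, h1] at this
    exact this
  · have := (mcc_contAt ε (-1) (by nlinarith)).continuousWithinAt (s := Set.Ioi (-1))
    rw [ContinuousWithinAt, hm1] at this
    exact this
  · unfold MCC
    rw [show (1 + ε ^ 2 + 2 * ε * (-ε)) = 1 - ε ^ 2 by ring,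
      show (1 + ε * (-ε)) = 1 - ε ^ 2 by ring]
    have h0 : (0:ℝ) < 1 - ε ^ 2 := by nlinarith
    have hs : Real.sqrt (1 - ε ^ 2) ≠ 0 := (Real.sqrt_pos.mpr h0).ne'
    rw [show (1 - ε ^ 2) = Real.sqrt (1 - ε ^ 2) * Real.sqrt (1 - ε ^ 2) by
      rw [Real.mul_self_sqrt h0.le]]
    field_simp
    rw [Real.sqrt_sq (Real.sqrt_nonneg _)]
    nlinarith [Real.sq_sqrt h0.le]
  · intro ρ hρ
    obtain ⟨hρ1, hρ2⟩ := hρ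
    have hD : (0:ℝ) < 1 + ε ^ 2 + 2 * ε * ρ := by nlinarith
    have hs : (0:ℝ) < Real.sqrt (1 + ε ^ 2 + 2 * ε * ρ) := Real.sqrt_pos.mpr hD
    have hnum : (0:ℝ) < 1 + ε * ρ := by nlinarith
    have key : Real.sqrt (1 - ε ^ 2) * Real.sqrt (1 + ε ^ 2 + 2 * ε * ρ) ≤ 1 + ε * ρ := by
      rw [← Real.sqrt_mul (by nlinarith)]
      have h2 : (1 - ε ^ 2) * (1 + ε ^ 2 + 2 * ε * ρ) ≤ (1 + ε * ρ) ^ 2 := by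
        nlinarith [sq_nonneg (ε * (ρ + ε))]
      calc Real.sqrt ((1 - ε ^ 2) * (1 + ε ^ 2 + 2 * ε * ρ)) ≤ Real.sqrt ((1 + ε * ρ) ^ 2) :=
            Real.sqrt_le_sqrt h2
        _ = 1 + ε * ρ := Real.sqrt_sq hnum.le
    have hdiv : Real.sqrt (1 - ε ^ 2) ≤ (1 + ε * ρ) / Real.sqrt (1 + ε ^ 2 + 2 * ε * ρ) :=
      (le_div_iff₀ hs).mpr key
    calc (1 + 2 * Real.sqrt (1 - ε ^ 2)) / 3
        ≤ (1 + 2 * ((1 + ε * ρ) / Real.sqrt (1 + ε ^ 2 + 2 * ε * ρ))) / 3 := by gcongr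
      _ = MCC ε ρ := by unfold MCC; ring
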